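/- arXiv:1209.4796 — 5 statements merged into one kernel-verified Lean document; each statement's English description precedes it below -/
import Mathlib

section
/- Let κ be a regular uncountable cardinal, let S ⊆ κ be a stationary subset of κ, let λ < κ be an ordinal, and let L ⊆ [0, λ] be a set of ordinals with λ ∈ L such that λ is a limit point of L (in the order topology). Define K = {⟨x, y⟩ ∈ L × S : x < λ, or (x = λ and y is an isolated point of S)}, endowed with the subspace topology of the product L × S. Then the sets A = {⟨λ, y⟩ ∈ K} and B = {⟨x, y⟩ ∈ K : y is a limit point of S} are closed and disjoint subsets of K that cannot be separated by disjoint open neighborhoods in K. -/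
open Set Topology Cardinal

/-- A subset `C` of the ordinals is closed and unbounded (club) in the ordinal `κ`:
it is contained in `[0, κ)`, cofinal in `κ`, and topologically closed in the
subspace `[0, κ)` (with the order topology on ordinals). -/
def IsClubIn (C : Set Ordinal) (κ : Ordinal) : Prop :=
  C ⊆ Set.Iio κ ∧ (∀ α < κ, ∃ β ∈ C, α ≤ β) ∧ ∀ α < κ, α ∈ closure C → α ∈ C

/-- A subset `S` of the ordinals is stationary in `κ` if it lies in `[0, κ)` and
meets every closed unbounded subset of `κ`. -/
def IsStationaryIn (S : Set Ordinal) (κ : Ordinal) : Prop :=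
  S ⊆ Set.Iio κ ∧ ∀ C : Set Ordinal, IsClubIn C κ → (S ∩ C).Nonempty

/-- `p` is a limit point of the set `L` of ordinals: `p` is a limit of points
of `L` other than `p` (in the order topology on ordinals). A point `p ∈ L` is
isolated in `L` iff it is not a limit point of `L`. -/
def IsLimitPointOf (p : Ordinal) (L : Set Ordinal) : Prop :=
  p ∈ closure (L \ {p})

lemma isLimitPointOf_iff_derivedSet {p : Ordinal} {L : Set Ordinal} :
    IsLimitPointOf p L ↔ p ∈ derivedSet L := by
  rw [IsLimitPointOf, mem_derivedSet, accPt_principal_iff_clusterPt, mem_closure_iff_clusterPt]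

lemma icc_club {κ : Ordinal} (hκ : Order.IsSuccLimit κ) {α : Ordinal} (hα : α < κ) :
    IsClubIn (Set.Ioo α κ) κ := by
  refine ⟨fun x hx => hx.2, fun γ hγ => ?_, fun β hβ hcl => ?_⟩
  · refine ⟨max α γ + 1, ⟨?_, ?_⟩, ?_⟩
    · exact lt_of_le_of_lt (le_max_left α γ)
        (by rw [Ordinal.add_one_eq_succ]; exact Order.lt_succ _)
    · rw [Ordinal.add_one_eq_succ]; exact hκ.succ_lt (max_lt hα hγ)
    · exact le_of_lt (lt_of_le_of_lt (le_max_right α γ)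
        (by rw [Ordinal.add_one_eq_succ]; exact Order.lt_succ _))
  · have h1 : closure (Set.Ioo α κ) ⊆ Set.Ici (α + 1) := by
      apply closure_minimal _ isClosed_Ici
      intro x hx
      rw [Ordinal.add_one_eq_succ, Set.mem_Ici, Order.succ_le_iff]
      exact hx.1
    have h2 := h1 hcl
    rw [Set.mem_Ici, Ordinal.add_one_eq_succ, Order.succ_le_iff] at h2
    exact ⟨h2, hβ⟩

lemma exists_isolated_above {S : Set Ordinal} {κ : Ordinal} (hκ : Order.IsSuccLimit κ)
    (hstat : IsStationaryIn S κ) {α : Ordinal} (hα : α < κ) :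
    ∃ y ∈ S, α < y ∧ ¬ IsLimitPointOf y S := by
  obtain ⟨y0, hy0S, hy0⟩ := hstat.2 _ (icc_club hκ hα)
  have hne : {z : Ordinal | z ∈ S ∧ α < z}.Nonempty := ⟨y0, hy0S, hy0.1⟩
  set y := WellFounded.min Ordinal.lt_wf _ hne with hy
  have hymem : y ∈ S ∧ α < y := WellFounded.min_mem Ordinal.lt_wf _ hne
  refine ⟨y, hymem.1, hymem.2, ?_⟩
  intro hcontra
  have hsub : S \ {y} ⊆ Set.Iic α ∪ Set.Ici (y + 1) := by
    intro z hz
    rcases lt_trichotomy z y with h | h | h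
    · left
      have := fun hz' => WellFounded.not_lt_min Ordinal.lt_wf {z : Ordinal | z ∈ S ∧ α < z} (x := z) hz'
      by_contra hza
      simp only [Set.mem_Iic, not_le] at hza
      exact this ⟨hz.1, hza⟩ h
    · exact absurd h hz.2
    · right
      rw [Set.mem_Ici, Ordinal.add_one_eq_succ, Order.succ_le_iff]
      exact h
  have := closure_minimal hsub (isClosed_Iic.union isClosed_Ici) hcontra
  rcases this with h | h
  · exact absurd hymem.2 (not_lt.mpr h)
  · rw [Set.mem_Ici, Ordinal.add_one_eq_succ, Order.succ_le_iff] at h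
    exact lt_irrefl y h

lemma open_rect {L S : Set Ordinal} {K : Set (↥L × ↥S)} {O : Set ↥K} (hO : IsOpen O)
    {p : ↥K} (hp : p ∈ O) :
    ∃ Wx ∈ 𝓝 (((p : ↥L × ↥S).1 : Ordinal)), ∃ Wy ∈ 𝓝 (((p : ↥L × ↥S).2 : Ordinal)),
      ∀ q : ↥K, ((q : ↥L × ↥S).1 : Ordinal) ∈ Wx → ((q : ↥L × ↥S).2 : Ordinal) ∈ Wy → q ∈ O := by
  have hind : Topology.IsInducing (fun q : ↥K =>
      (((q : ↥L × ↥S).1 : Ordinal), ((q : ↥L × ↥S).2 : Ordinal))) :=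
    (Topology.IsInducing.subtypeVal.prodMap Topology.IsInducing.subtypeVal).comp
      Topology.IsInducing.subtypeVal
  have h1 : O ∈ 𝓝 p := hO.mem_nhds hp
  rw [hind.nhds_eq_comap, Filter.mem_comap] at h1
  obtain ⟨W, hW, hWsub⟩ := h1
  rw [mem_nhds_prod_iff] at hW
  obtain ⟨u, hu, v, hv, huv⟩ := hW
  exact ⟨u, hu, v, hv, fun q h1 h2 => hWsub (huv ⟨h1, h2⟩)⟩

/-- Katetov-type lemma, Lemma 1 of the paper.
Let `κ` be a regular uncountable cardinal, `S ⊆ κ` stationary, `λ < κ`,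
`λ ∈ L ⊆ [0, λ]` with `λ` a limit point of `L`, and
`K = {⟨x, y⟩ ∈ L × S : x < λ, or x = λ and y is isolated in S}` with the subspace
topology of the product `L × S`. Then `A = {⟨λ, y⟩ ∈ K}` and
`B = {⟨x, y⟩ ∈ K : y is a limit point of S}` are closed disjoint subsets of `K`
that cannot be separated by disjoint open neighborhoods in `K`. -/
theorem statement0 (κ : Cardinal) (hreg : κ.IsRegular) (hunc : ℵ₀ < κ)
    (S : Set Ordinal) (hstat : IsStationaryIn S κ.ord)
    (lam : Ordinal) (hlam : lam < κ.ord)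
    (L : Set Ordinal) (hL : L ⊆ Set.Iic lam) (hlamL : lam ∈ L)
    (hlim : IsLimitPointOf lam L)
    (K : Set (↥L × ↥S))
    (hK : K = {p : ↥L × ↥S | (p.1 : Ordinal) < lam ∨
      ((p.1 : Ordinal) = lam ∧ ¬ IsLimitPointOf (p.2 : Ordinal) S)})
    (A : Set ↥K) (hA : A = {p : ↥K | ((p : ↥L × ↥S).1 : Ordinal) = lam})
    (B : Set ↥K) (hB : B = {p : ↥K | IsLimitPointOf ((p : ↥L × ↥S).2 : Ordinal) S}) :
    IsClosed A ∧ IsClosed B ∧ Disjoint A B ∧ ¬ SeparatedNhds A B := by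
  have hκlim : Order.IsSuccLimit κ.ord := Cardinal.isSuccLimit_ord hunc.le
  have hcont1 : Continuous (fun p : ↥K => ((p : ↥L × ↥S).1 : Ordinal)) :=
    continuous_subtype_val.comp (continuous_fst.comp continuous_subtype_val)
  have hcont2 : Continuous (fun p : ↥K => ((p : ↥L × ↥S).2 : Ordinal)) :=
    continuous_subtype_val.comp (continuous_snd.comp continuous_subtype_val)
  have hlam0 : 0 < lam := by
    rcases eq_zero_or_pos lam with h | h
    · exfalso
      have hEmpty : L \ {lam} = ∅ := by
        apply Set.eq_empty_iff_forall_notMem.mpr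
        intro x hx
        apply hx.2
        have := hL hx.1
        rw [Set.mem_Iic, h, nonpos_iff_eq_zero] at this
        rw [this, h]
        rfl
      rw [IsLimitPointOf, hEmpty, closure_empty] at hlim
      exact hlim
    · exact h
  refine ⟨?_, ?_, ?_, ?_⟩
  · rw [hA]
    exact isClosed_eq hcont1 continuous_const
  · rw [hB]
    have heq : {p : ↥K | IsLimitPointOf ((p : ↥L × ↥S).2 : Ordinal) S}
        = (fun p : ↥K => ((p : ↥L × ↥S).2 : Ordinal)) ⁻¹' derivedSet S := by
      ext p
      simp only [Set.mem_setOf_eq, Set.mem_preimage, isLimitPointOf_iff_derivedSet]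
    rw [heq]
    exact (isClosed_derivedSet S).preimage hcont2
  · rw [Set.disjoint_left]
    intro p hpA hpB
    have hpK := (Set.ext_iff.mp hK _).mp p.2
    rw [hA] at hpA
    rw [hB] at hpB
    rcases hpK with h | h
    · exact absurd hpA (ne_of_lt h)
    · exact h.2 hpB
  · rintro ⟨U, V, hUo, hVo, hAU, hBV, hUV⟩
    set P' : Ordinal → Ordinal → Prop := fun y β =>
      ∀ q : ↥K, ((q : ↥L × ↥S).2 : Ordinal) = y → β < ((q : ↥L × ↥S).1 : Ordinal) → q ∈ U
      with hP'def
    -- isolated points above any bound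
    have hSub : ∀ α < κ.ord, ∃ y ∈ S, α < y ∧ ¬ IsLimitPointOf y S :=
      fun α hα => exists_isolated_above hκlim hstat hα
    -- every isolated point admits a threshold
    have hPex : ∀ y, y ∈ S → ¬ IsLimitPointOf y S → ∃ β < lam, P' y β := by
      intro y hyS hyiso
      have hmemK : (⟨⟨lam, hlamL⟩, ⟨y, hyS⟩⟩ : ↥L × ↥S) ∈ K := by
        rw [hK]; exact Or.inr ⟨rfl, hyiso⟩
      have hpU : (⟨_, hmemK⟩ : ↥K) ∈ U := hAU (by rw [hA]; exact rfl)
      obtain ⟨Wx, hWx, Wy, hWy, hrect⟩ := open_rect hUo hpU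
      have hWx' : Wx ∈ 𝓝 lam := hWx
      have hWy' : Wy ∈ 𝓝 y := hWy
      obtain ⟨β, hβ, hIoc⟩ := exists_Ioc_subset_of_mem_nhds hWx' ⟨0, hlam0⟩
      refine ⟨β, hβ, fun q hq2 hq1 => ?_⟩
      apply hrect q (hIoc ⟨hq1, hL (q : ↥L × ↥S).1.2⟩)
      rw [hq2]
      exact mem_of_mem_nhds hWy'
    -- pigeonhole : a single threshold works unboundedly often
    have hpick : ∃ β < lam, ∀ α < κ.ord,
        ∃ y, y ∈ S ∧ ¬ IsLimitPointOf y S ∧ P' y β ∧ α < y := by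
      by_contra hcon
      push_neg at hcon
      choose g hg1 hg2 using hcon
      have hγ : Ordinal.bsup lam g < κ.ord := by
        apply Ordinal.bsup_lt_ord
        · rw [hreg.cof_eq]
          exact Cardinal.lt_ord.mp hlam
        · exact hg1
      obtain ⟨y, hyS, hy, hyiso⟩ := hSub _ hγ
      obtain ⟨β, hβ, hP⟩ := hPex y hyS hyiso
      have hle : y ≤ g β hβ := hg2 β hβ y hyS hyiso hP
      exact absurd hy (not_lt.mpr (hle.trans (Ordinal.le_bsup g β hβ)))
    obtain ⟨βs, hβs, hTu⟩ := hpick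
    set T : Set Ordinal := {y | y ∈ S ∧ ¬ IsLimitPointOf y S ∧ P' y βs} with hTdef
    have hTu' : ∀ α < κ.ord, ∃ t ∈ T, α < t := by
      intro α hα
      obtain ⟨y, h1, h2, h3, h4⟩ := hTu α hα
      exact ⟨y, ⟨h1, h2, h3⟩, h4⟩
    -- pick x* ∈ L with βs < x* < lam
    have hxex : ∃ x, x ∈ L ∧ βs < x ∧ x < lam := by
      have h1 := hlim
      rw [IsLimitPointOf, mem_closure_iff] at h1
      obtain ⟨x, hx1, hx2⟩ := h1 (Set.Ioo βs (lam + 1)) isOpen_Ioo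
        ⟨hβs, by rw [Ordinal.add_one_eq_succ]; exact Order.lt_succ _⟩
      refine ⟨x, hx2.1, hx1.1, ?_⟩
      exact lt_of_le_of_ne (hL hx2.1) hx2.2
    obtain ⟨xs, hxL, hβx, hxlam⟩ := hxex
    -- the club of limits of T
    set C : Set Ordinal := {α | α < κ.ord ∧ 0 < α ∧ ∀ γ < α, ∃ t ∈ T, γ < t ∧ t < α}
      with hCdef
    have hC : IsClubIn C κ.ord := by
      refine ⟨fun α hα => hα.1, ?_, ?_⟩
      · intro α hα
        have huex : ∀ δ : Ordinal, ∃ t, δ < κ.ord → (t ∈ T ∧ δ < t) := by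
          intro δ
          by_cases h : δ < κ.ord
          · obtain ⟨t, ht1, ht2⟩ := hTu' δ h
            exact ⟨t, fun _ => ⟨ht1, ht2⟩⟩
          · exact ⟨0, fun h' => absurd h' h⟩
        choose u hu using huex
        set seq : ℕ → Ordinal := fun n => Nat.rec (u α) (fun _ ih => u ih) n with hseqdef
        have hseqT : ∀ n, seq n ∈ T ∧ seq n < κ.ord := by
          intro n
          induction n with
          | zero =>
            have := hu α hα
            exact ⟨this.1, hstat.1 this.1.1⟩
          | succ n ih =>
            have := hu (seq n) ih.2
            exact ⟨this.1, hstat.1 this.1.1⟩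
        have hseqlt : ∀ n, seq n < seq (n + 1) := fun n => (hu (seq n) (hseqT n).2).2
        have hβκ : (⨆ n, seq n) < κ.ord := by
          apply Ordinal.iSup_lt_ord_lift
          · rw [hreg.cof_eq]
            simpa using hunc
          · exact fun n => (hseqT n).2
        have hαseq : α < seq 0 := (hu α hα).2
        refine ⟨⨆ n, seq n, ⟨hβκ, ?_, ?_⟩, ?_⟩
        · exact lt_of_le_of_lt (zero_le (a := α)) (hαseq.trans_le (Ordinal.le_iSup seq 0))
        · intro γ hγ
          rw [Ordinal.lt_iSup_iff] at hγ
          obtain ⟨n, hn⟩ := hγ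
          exact ⟨seq n, (hseqT n).1, hn, (hseqlt n).trans_le (Ordinal.le_iSup seq (n + 1))⟩
        · exact (hαseq.trans_le (Ordinal.le_iSup seq 0)).le
      · intro α hα hcl
        by_cases hαC : α ∈ C
        · exact hαC
        have hα0 : 0 < α := by
          by_contra h0
          push_neg at h0
          have hsub : C ⊆ Set.Ici (1 : Ordinal) :=
            fun c hc => Order.one_le_iff_pos.mpr hc.2.1
          have := closure_minimal hsub isClosed_Ici hcl
          rw [Set.mem_Ici] at this
          exact absurd (this.trans h0) (by norm_num)
        refine ⟨hα, hα0, ?_⟩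
        intro γ hγ
        rw [mem_closure_iff] at hcl
        obtain ⟨c, hc1, hc2⟩ := hcl (Set.Ioo γ (α + 1)) isOpen_Ioo
          ⟨hγ, by rw [Ordinal.add_one_eq_succ]; exact Order.lt_succ _⟩
        have hcα : c ≤ α := by
          have := hc1.2
          rwa [Ordinal.add_one_eq_succ, Order.lt_succ_iff] at this
        have hclt : c < α := lt_of_le_of_ne hcα (fun h => hαC (h ▸ hc2))
        obtain ⟨t, htT, ht1, ht2⟩ := hc2.2.2 γ hc1.1
        exact ⟨t, htT, ht1, ht2.trans hclt⟩
    obtain ⟨ys, hysS, hysC⟩ := hstat.2 C hC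
    have hylim : IsLimitPointOf ys S := by
      rw [IsLimitPointOf, mem_closure_iff]
      intro o ho hyo
      obtain ⟨l, hl, hIoc⟩ := exists_Ioc_subset_of_mem_nhds (ho.mem_nhds hyo) ⟨0, hysC.2.1⟩
      obtain ⟨t, htT, ht1, ht2⟩ := hysC.2.2 l hl
      exact ⟨t, hIoc ⟨ht1, ht2.le⟩, htT.1, ne_of_lt ht2⟩
    have hmemK : (⟨⟨xs, hxL⟩, ⟨ys, hysS⟩⟩ : ↥L × ↥S) ∈ K := by
      rw [hK]; exact Or.inl hxlam
    have hqV : (⟨_, hmemK⟩ : ↥K) ∈ V := hBV (by rw [hB]; exact hylim)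
    obtain ⟨Wx, hWx, Wy, hWy, hrect⟩ := open_rect hVo hqV
    have hWx' : Wx ∈ 𝓝 xs := hWx
    have hWy' : Wy ∈ 𝓝 ys := hWy
    obtain ⟨l, hl, hIoc⟩ := exists_Ioc_subset_of_mem_nhds hWy' ⟨0, hysC.2.1⟩
    obtain ⟨t, htT, ht1, ht2⟩ := hysC.2.2 l hl
    have hmemK2 : (⟨⟨xs, hxL⟩, ⟨t, htT.1⟩⟩ : ↥L × ↥S) ∈ K := by
      rw [hK]; exact Or.inl hxlam
    have hrV : (⟨_, hmemK2⟩ : ↥K) ∈ V :=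
      hrect _ (mem_of_mem_nhds hWx') (hIoc ⟨ht1, ht2.le⟩)
    have hrU : (⟨_, hmemK2⟩ : ↥K) ∈ U := htT.2.2 _ rfl hβx
    exact Set.disjoint_left.mp hUV hrU hrV
end

section
/- In the setting of the Katetov-type lemma: let κ be a regular uncountable cardinal, S ⊆ κ stationary, λ < κ, λ ∈ L ⊆ [0, λ] with λ a limit point of L, and K = {⟨x, y⟩ ∈ L × S : x < λ, or (x = λ and y is isolated in S)}. Then for every open set U in K containing B = {⟨x, y⟩ ∈ K : y is a limit point of S}, the closure of U in K meets A = {⟨λ, y⟩ ∈ K}; more precisely, there exists an ordinal ȳ < κ such that (L \ {λ}) × ([ȳ, κ) ∩ S) ⊆ U. -/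
open Set Topology Cardinal

universe u

private lemma stat_unbounded {κ : Cardinal.{u}} (hreg : κ.IsRegular) {S : Set Ordinal.{u}}
    (hstat : IsStationaryIn S κ.ord) : ∀ α < κ.ord, ∃ y ∈ S, α < y := by
  intro α hα
  have hκlim : Order.IsSuccLimit κ.ord := Cardinal.isSuccLimit_ord hreg.aleph0_le
  have hclub : IsClubIn (Ioo α κ.ord) κ.ord := by
    refine ⟨fun x hx => hx.2, ?_, ?_⟩
    · intro b hb
      refine ⟨max (α + 1) b, ⟨?_, ?_⟩, le_max_right _ _⟩
      · exact lt_of_lt_of_le (Order.lt_succ α) (by rw [Ordinal.add_one_eq_succ] at *; exact le_max_left _ _)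
      · apply max_lt ?_ hb
        rw [Ordinal.add_one_eq_succ]
        exact hκlim.succ_lt hα
    · intro b hb hbc
      have hsub : closure (Ioo α κ.ord) ⊆ Ici (α + 1) := by
        apply closure_minimal ?_ isClosed_Ici
        intro x hx
        rw [Ordinal.add_one_eq_succ, mem_Ici, Order.succ_le_iff]
        exact hx.1
      refine ⟨?_, hb⟩
      have := hsub hbc
      rw [mem_Ici, Ordinal.add_one_eq_succ, Order.succ_le_iff] at this
      exact this
  obtain ⟨y, hyS, hy⟩ := hstat.2 _ hclub
  exact ⟨y, hyS, hy.1⟩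

noncomputable def osup (f : Ordinal.{u} → Ordinal.{u}) (γ : Ordinal.{u}) : Ordinal.{u} :=
  ⨆ i : γ.ToType, f ((Ordinal.ToType.mk (o := γ)).symm i)

private lemma le_osup (f : Ordinal.{u} → Ordinal.{u}) {b γ : Ordinal.{u}} (h : b < γ) :
    f b ≤ osup f γ := by
  have := le_ciSup (f := fun i : γ.ToType => f ((Ordinal.ToType.mk (o := γ)).symm i))
    (Ordinal.bddAbove_range.{u,u} _) (Ordinal.ToType.mk (o := γ) ⟨b, h⟩)
  simpa [osup] using this

private lemma osup_lt {f : Ordinal.{u} → Ordinal.{u}} {γ c : Ordinal.{u}} (h1 : γ.card < c.cof)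
    (h2 : ∀ b < γ, f b < c) : osup f γ < c := by
  apply Ordinal.iSup_lt_ord
  · rwa [Cardinal.mk_toType]
  · intro i
    exact h2 _ ((Ordinal.ToType.mk (o := γ)).symm i).2

private lemma memclos {a : Ordinal.{u}} (h : a ≠ 0) {s : Set Ordinal.{u}} :
    a ∈ closure s ↔ ∀ b < a, (Ioc b a ∩ s).Nonempty := by
  rw [mem_closure_iff_nhds_basis (SuccOrder.hasBasis_nhds_Ioc_of_exists_lt ⟨0, pos_iff_ne_zero.2 h⟩)]
  constructor
  · intro H b hb; obtain ⟨y, hy, hy2⟩ := H b hb; exact ⟨y, hy2, hy⟩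
  · intro H b hb; obtain ⟨y, hy2, hy⟩ := H b hb; exact ⟨y, hy, hy2⟩

private lemma fodor_lite {κ : Cardinal.{u}} (hreg : κ.IsRegular) (hunc : ℵ₀ < κ)
    {S : Set Ordinal.{u}} (hstat : IsStationaryIn S κ.ord)
    (g : Ordinal.{u} → Ordinal.{u}) (hg : ∀ y ∈ S, IsLimitPointOf y S → g y < y) :
    ∃ β < κ.ord, ∀ α < κ.ord, ∃ y ∈ S, IsLimitPointOf y S ∧ α ≤ y ∧ g y ≤ β := by
  by_contra hcon
  push_neg at hcon
  -- hcon : ∀ β < κ.ord, ∃ α < κ.ord, ∀ y ∈ S, IsLimitPointOf y S → α ≤ y → β < g y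
  classical
  set h : Ordinal.{u} → Ordinal.{u} :=
    fun b => if hb : b < κ.ord then Classical.choose (hcon b hb) else 0 with hh
  have hspec : ∀ b < κ.ord, h b < κ.ord ∧ ∀ y ∈ S, IsLimitPointOf y S → g y ≤ b → y < h b := by
    intro b hb
    obtain ⟨hα, hα2⟩ := Classical.choose_spec (hcon b hb)
    simp only [hh, dif_pos hb]
    refine ⟨hα, fun y hyS hyl hgy => ?_⟩
    by_contra hy
    push_neg at hy
    exact absurd hgy (not_le.2 (hα2 y hyS hyl hy))
  have hκlim : Order.IsSuccLimit κ.ord := Cardinal.isSuccLimit_ord hreg.aleph0_le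
  have hcof : κ.ord.cof = κ := hreg.cof_eq
  set C : Set Ordinal.{u} :=
    {δ | δ < κ.ord ∧ δ ∈ closure (S ∩ Iio δ) ∧ ∀ b < δ, h b < δ} with hC
  have hCne : ∀ c ∈ C, c ≠ 0 := by
    rintro c ⟨-, hc, -⟩ rfl
    rw [show S ∩ Iio (0 : Ordinal.{u}) = ∅ from by ext z; simp] at hc
    simp at hc
  have hclub : IsClubIn C κ.ord := by
    refine ⟨fun x hx => hx.1, ?_, ?_⟩
    · -- unbounded
      intro α hα
      set nxt : Ordinal.{u} → Ordinal.{u} := fun γ =>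
        if hγ : max γ (osup h γ) < κ.ord then
          Classical.choose (stat_unbounded hreg hstat _ hγ) else 0 with hnxt
      have nxtspec : ∀ γ < κ.ord, nxt γ ∈ S ∧ γ < nxt γ ∧ osup h γ < nxt γ ∧ nxt γ < κ.ord := by
        intro γ hγ
        have hosup : osup h γ < κ.ord := by
          apply osup_lt
          · rw [hcof]; exact Cardinal.lt_ord.1 hγ
          · exact fun b hb => (hspec b (hb.trans hγ)).1
        have hmax : max γ (osup h γ) < κ.ord := max_lt hγ hosup
        obtain ⟨hS, hgt⟩ := Classical.choose_spec (stat_unbounded hreg hstat _ hmax)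
        simp only [hnxt, dif_pos hmax]
        exact ⟨hS, (le_max_left _ _).trans_lt hgt, (le_max_right _ _).trans_lt hgt,
          hstat.1 hS⟩
      set a : ℕ → Ordinal.{u} := fun n => nxt^[n] α with ha
      have ha0 : a 0 = α := rfl
      have hasucc : ∀ n, a (n + 1) = nxt (a n) := by
        intro n; rw [ha]; exact Function.iterate_succ_apply' _ _ _
      have haκ : ∀ n, a n < κ.ord := by
        intro n
        induction n with
        | zero => exact hα
        | succ m ih => rw [hasucc]; exact (nxtspec _ ih).2.2.2
      set δ : Ordinal.{u} := ⨆ n, a n with hδ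
      have hδκ : δ < κ.ord := by
        rw [hδ]
        apply Ordinal.iSup_lt_ord_lift ?_ haκ
        rw [Cardinal.mk_denumerable, Cardinal.lift_aleph0, hcof]
        exact hunc
      have hlt : ∀ n, a n < δ := by
        intro n
        calc a n < a (n + 1) := by rw [hasucc]; exact (nxtspec _ (haκ n)).2.1
        _ ≤ δ := le_ciSup (Ordinal.bddAbove_range.{0,u} _) (n + 1)
      have hex : ∀ b < δ, ∃ n, b < a n := by
        intro b hb
        by_contra hbn
        push_neg at hbn
        exact absurd (ciSup_le hbn) (not_le.2 hb)
      have hδ0 : δ ≠ 0 := by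
        intro h0
        exact absurd ((h0 ▸ hlt 0)) (by simp)
      refine ⟨δ, ⟨hδκ, ?_, ?_⟩, ?_⟩
      · rw [memclos hδ0]
        intro b hb
        obtain ⟨n, hn⟩ := hex b hb
        refine ⟨a (n + 1), ⟨hn.trans ?_, (hlt (n + 1)).le⟩, ?_, hlt (n + 1)⟩
        · rw [hasucc]; exact (nxtspec _ (haκ n)).2.1
        · rw [hasucc]; exact (nxtspec _ (haκ n)).1
      · intro b hb
        obtain ⟨n, hn⟩ := hex b hb
        calc h b ≤ osup h (a n) := le_osup h hn
        _ < a (n + 1) := by rw [hasucc]; exact (nxtspec _ (haκ n)).2.2.1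
        _ < δ := hlt (n + 1)
      · rw [← ha0]; exact (hlt 0).le
    · -- closed
      intro δ hδκ hδcl
      have hδ0 : δ ≠ 0 := by
        have : closure C ⊆ Ici 1 := by
          apply closure_minimal ?_ isClosed_Ici
          exact fun c hc => Ordinal.one_le_iff_ne_zero.2 (hCne c hc)
        intro h0
        have := this hδcl
        rw [h0] at this
        simp at this
      have H := (memclos hδ0).1 hδcl
      refine ⟨hδκ, ?_, ?_⟩
      · rw [memclos hδ0]
        intro b hb
        obtain ⟨c, hc1, hc2⟩ := H b hb
        obtain ⟨s, hs1, hs2⟩ := (memclos (hCne c hc2)).1 hc2.2.1 b hc1.1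
        exact ⟨s, ⟨hs1.1, hs1.2.trans hc1.2⟩, hs2.1, lt_of_lt_of_le hs2.2 hc1.2⟩
      · intro b hb
        obtain ⟨c, hc1, hc2⟩ := H b hb
        exact lt_of_lt_of_le (hc2.2.2 b hc1.1) hc1.2
  obtain ⟨y, hyS, hyC⟩ := hstat.2 C hclub
  have hylim : IsLimitPointOf y S := by
    have : S ∩ Iio y ⊆ S \ {y} := fun z hz => ⟨hz.1, ne_of_lt hz.2⟩
    exact closure_mono this hyC.2.1
  have hgy : g y < y := hg y hyS hylim
  have h1 : h (g y) < y := hyC.2.2 _ hgy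
  have h2 : y < h (g y) := (hspec (g y) (hgy.trans hyC.1)).2 y hyS hylim le_rfl
  exact absurd (h1.trans h2) (lt_irrefl _)

private lemma limpt_ne_zero {y : Ordinal.{u}} {S : Set Ordinal.{u}} (h : IsLimitPointOf y S) :
    y ≠ 0 := by
  intro h0
  subst h0
  have hsub : S \ {0} ⊆ Ici 1 := fun z hz => Ordinal.one_le_iff_ne_zero.2 hz.2
  have := (closure_minimal hsub isClosed_Ici) h
  exact absurd this (by simp)


/-- proof of the Katetov-type lemma.
In the setting of the Katetov-type lemma, for every open set `U` in `K`
containing `B`, the closure of `U` in `K` meets `A`; more precisely, there is an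
ordinal `ȳ < κ` such that `(L \ {λ}) × ([ȳ, κ) ∩ S) ⊆ U`. -/
theorem statement1 (κ : Cardinal) (hreg : κ.IsRegular) (hunc : ℵ₀ < κ)
    (S : Set Ordinal) (hstat : IsStationaryIn S κ.ord)
    (lam : Ordinal) (hlam : lam < κ.ord)
    (L : Set Ordinal) (hL : L ⊆ Set.Iic lam) (hlamL : lam ∈ L)
    (hlim : IsLimitPointOf lam L)
    (K : Set (↥L × ↥S))
    (hK : K = {p : ↥L × ↥S | (p.1 : Ordinal) < lam ∨
      ((p.1 : Ordinal) = lam ∧ ¬ IsLimitPointOf (p.2 : Ordinal) S)})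
    (A : Set ↥K) (hA : A = {p : ↥K | ((p : ↥L × ↥S).1 : Ordinal) = lam})
    (B : Set ↥K) (hB : B = {p : ↥K | IsLimitPointOf ((p : ↥L × ↥S).2 : Ordinal) S}) :
    ∀ U : Set ↥K, IsOpen U → B ⊆ U →
      (closure U ∩ A).Nonempty ∧
      ∃ ybar < κ.ord, ∀ p : ↥K,
        ((p : ↥L × ↥S).1 : Ordinal) ≠ lam → ybar ≤ ((p : ↥L × ↥S).2 : Ordinal) →
        p ∈ U := by
  intro U hUopen hBU
  classical
  obtain ⟨V, hVopen, hVU⟩ := isOpen_induced_iff.1 hUopen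
  have hord : Order.IsSuccLimit κ.ord := Cardinal.isSuccLimit_ord hreg.aleph0_le
  -- Step 2: pointwise extraction from openness of U at points of B
  have step2 : ∀ x y : Ordinal, x ∈ L → x < lam → y ∈ S → IsLimitPointOf y S →
      ∃ g < y, ∀ z ∈ S, g < z → z ≤ y →
        ∀ p : ↥K, ((p : ↥L × ↥S).1 : Ordinal) = x →
          ((p : ↥L × ↥S).2 : Ordinal) = z → p ∈ U := by
    intro x y hxL hxlam hyS hylim
    have hqK : ((⟨x, hxL⟩ : ↥L), (⟨y, hyS⟩ : ↥S)) ∈ K := by rw [hK]; exact Or.inl hxlam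
    have hqB : (⟨_, hqK⟩ : ↥K) ∈ B := by rw [hB]; exact hylim
    have hqV : ((⟨x, hxL⟩ : ↥L), (⟨y, hyS⟩ : ↥S)) ∈ V := by
      have := hBU hqB
      rw [← hVU] at this
      exact this
    obtain ⟨u, v, hu, hv, hxu, hyv, huv⟩ := isOpen_prod_iff.1 hVopen _ _ hqV
    obtain ⟨O, hO, hOv⟩ := isOpen_induced_iff.1 hv
    have hyO : y ∈ O := by rw [← hOv] at hyv; exact hyv
    obtain ⟨g, hgy, hgO⟩ :=
      (SuccOrder.hasBasis_nhds_Ioc_of_exists_lt ⟨0, pos_iff_ne_zero.2 (limpt_ne_zero hylim)⟩).mem_iff.1 (hO.mem_nhds hyO)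
    refine ⟨g, hgy, ?_⟩
    intro z hzS hgz hzy p hp1 hp2
    have hmem : (p : ↥L × ↥S) ∈ u ×ˢ v := by
      constructor
      · have : (p : ↥L × ↥S).1 = ⟨x, hxL⟩ := Subtype.ext hp1
        rw [this]; exact hxu
      · rw [← hOv]
        show ((p : ↥L × ↥S).2 : Ordinal) ∈ O
        rw [hp2]
        exact hgO ⟨hgz, hzy⟩
    rw [← hVU]
    exact huv hmem
  -- Step 2': totalize the choice of g
  have step2' : ∀ x y : Ordinal, ∃ g : Ordinal,
      ((y ∈ S ∧ IsLimitPointOf y S) → g < y) ∧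
      (x ∈ L → x < lam → y ∈ S → IsLimitPointOf y S →
        ∀ z ∈ S, g < z → z ≤ y →
          ∀ p : ↥K, ((p : ↥L × ↥S).1 : Ordinal) = x →
            ((p : ↥L × ↥S).2 : Ordinal) = z → p ∈ U) := by
    intro x y
    by_cases hx : x ∈ L ∧ x < lam
    · by_cases hy : y ∈ S ∧ IsLimitPointOf y S
      · obtain ⟨g, hg1, hg2⟩ := step2 x y hx.1 hx.2 hy.1 hy.2
        exact ⟨g, fun _ => hg1, fun _ _ _ _ => hg2⟩
      · refine ⟨0, fun hy2 => pos_iff_ne_zero.2 (limpt_ne_zero hy2.2), ?_⟩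
        intro _ _ h1 h2
        exact absurd ⟨h1, h2⟩ hy
    · refine ⟨0, fun hy2 => pos_iff_ne_zero.2 (limpt_ne_zero hy2.2), ?_⟩
      intro h1 h2 _ _
      exact absurd ⟨h1, h2⟩ hx
  choose gf hgf1 hgf2 using step2'
  -- Step 4: weak Fodor for each column
  have step4 : ∀ x : Ordinal, ∃ β < κ.ord,
      ∀ α < κ.ord, ∃ y ∈ S, IsLimitPointOf y S ∧ α ≤ y ∧ gf x y ≤ β :=
    fun x => fodor_lite hreg hunc hstat (gf x) (fun y hyS hyl => hgf1 x y ⟨hyS, hyl⟩)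
  choose β hβ using step4
  -- Step 5: tail property for a fixed column
  have step5 : ∀ x ∈ L, x < lam → ∀ z ∈ S, β x < z →
      ∀ p : ↥K, ((p : ↥L × ↥S).1 : Ordinal) = x →
        ((p : ↥L × ↥S).2 : Ordinal) = z → p ∈ U := by
    intro x hxL hxlam z hzS hβz p hp1 hp2
    obtain ⟨y, hyS, hyl, hzy, hgyβ⟩ := (hβ x).2 z (hstat.1 hzS)
    exact hgf2 x y hxL hxlam hyS hyl z hzS (lt_of_le_of_lt hgyβ hβz) hzy p hp1 hp2
  -- the uniform bound
  have hs0κ : osup β lam < κ.ord := by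
    apply osup_lt
    · rw [hreg.cof_eq]; exact Cardinal.lt_ord.1 hlam
    · exact fun b _ => (hβ b).1
  have hybarκ : osup β lam + 1 < κ.ord := by
    rw [Ordinal.add_one_eq_succ]; exact hord.succ_lt hs0κ
  have tail : ∀ p : ↥K, ((p : ↥L × ↥S).1 : Ordinal) ≠ lam →
      osup β lam + 1 ≤ ((p : ↥L × ↥S).2 : Ordinal) → p ∈ U := by
    intro p hne hge
    have hxL : ((p : ↥L × ↥S).1 : Ordinal) ∈ L := (p : ↥L × ↥S).1.2
    have hxlam : ((p : ↥L × ↥S).1 : Ordinal) < lam := lt_of_le_of_ne (hL hxL) hne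
    have hzS : ((p : ↥L × ↥S).2 : Ordinal) ∈ S := (p : ↥L × ↥S).2.2
    have hβz : β ((p : ↥L × ↥S).1 : Ordinal) < ((p : ↥L × ↥S).2 : Ordinal) := by
      have h1 : β ((p : ↥L × ↥S).1 : Ordinal) ≤ osup β lam := le_osup β hxlam
      have h2 : osup β lam < osup β lam + 1 := by
        rw [Ordinal.add_one_eq_succ]; exact Order.lt_succ _
      exact lt_of_le_of_lt h1 (lt_of_lt_of_le h2 hge)
    exact step5 _ hxL hxlam _ hzS hβz p rfl rfl
  -- the point of A in the closure of U
  have hTne : (S ∩ Ici (osup β lam + 1)).Nonempty := by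
    obtain ⟨y, hyS, hy⟩ := stat_unbounded hreg hstat _ hybarκ
    exact ⟨y, hyS, hy.le⟩
  have hy0mem : sInf (S ∩ Ici (osup β lam + 1)) ∈ S ∩ Ici (osup β lam + 1) := csInf_mem hTne
  set y0 := sInf (S ∩ Ici (osup β lam + 1)) with hy0def
  have hy0S : y0 ∈ S := hy0mem.1
  have hy0ge : osup β lam + 1 ≤ y0 := hy0mem.2
  have hs0y0 : osup β lam < y0 := by
    refine lt_of_lt_of_le ?_ hy0ge
    rw [Ordinal.add_one_eq_succ]; exact Order.lt_succ _
  have hy0pos : y0 ≠ 0 := by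
    intro h0
    rw [h0] at hs0y0
    exact absurd hs0y0 (by simp)
  have hy0iso : ¬ IsLimitPointOf y0 S := by
    intro hlp
    obtain ⟨w, hw1, hw2⟩ := (memclos hy0pos).1 hlp (osup β lam) hs0y0
    have hwy : w < y0 := lt_of_le_of_ne hw1.2 hw2.2
    have hwT : w ∈ S ∩ Ici (osup β lam + 1) := by
      refine ⟨hw2.1, ?_⟩
      rw [mem_Ici, Ordinal.add_one_eq_succ, Order.succ_le_iff]
      exact hw1.1
    exact absurd (csInf_le' hwT) (not_le.2 hwy)
  have hpK : ((⟨lam, hlamL⟩ : ↥L), (⟨y0, hy0S⟩ : ↥S)) ∈ K := by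
    rw [hK]; exact Or.inr ⟨rfl, hy0iso⟩
  have hp0A : (⟨_, hpK⟩ : ↥K) ∈ A := by rw [hA]; exact rfl
  have hp0cl : (⟨_, hpK⟩ : ↥K) ∈ closure U := by
    rw [mem_closure_iff]
    intro N hNopen hp0N
    obtain ⟨V', hV'open, hV'N⟩ := isOpen_induced_iff.1 hNopen
    have hp0V' : ((⟨lam, hlamL⟩ : ↥L), (⟨y0, hy0S⟩ : ↥S)) ∈ V' := by
      rw [← hV'N] at hp0N; exact hp0N
    obtain ⟨u, v, hu, hv, hlu, hyv, huv⟩ := isOpen_prod_iff.1 hV'open _ _ hp0V'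
    obtain ⟨O1, hO1, hO1u⟩ := isOpen_induced_iff.1 hu
    have hlamO1 : lam ∈ O1 := by rw [← hO1u] at hlu; exact hlu
    obtain ⟨x, hx1, hx2⟩ := _root_.mem_closure_iff.1 hlim O1 hO1 hlamO1
    have hxL : x ∈ L := hx2.1
    have hxlam : x < lam := lt_of_le_of_ne (hL hxL) hx2.2
    have hqK : ((⟨x, hxL⟩ : ↥L), (⟨y0, hy0S⟩ : ↥S)) ∈ K := by
      rw [hK]; exact Or.inl hxlam
    refine ⟨⟨_, hqK⟩, ?_, ?_⟩
    · rw [← hV'N]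
      apply huv
      constructor
      · rw [← hO1u]; exact hx1
      · exact hyv
    · exact step5 x hxL hxlam y0 hy0S (lt_of_le_of_lt (le_osup β hxlam)
        (lt_of_le_of_lt (le_refl _) hs0y0)) _ rfl rfl
  exact ⟨⟨⟨_, hpK⟩, hp0cl, hp0A⟩, osup β lam + 1, hybarκ, tail⟩
end

section
/- Let G be a paratopological group with binary operation ⋆ and suppose T ⊆ G is (as an ordered topological subspace) a stationary subset of a regular uncountable cardinal κ. Then one can choose a subset S of T that is closed and unbounded in T, an ordinal λ ∈ T, and a set L ⊆ [0, λ] ∩ T such that: (1) λ ∈ L; (2) λ is a limit point of L; and (3) the operation ⋆, viewed as the map ⟨x, y⟩ ↦ x ⋆ y, is injective on L × S. -/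
open Set Topology Cardinal

/- ### Auxiliary lemmas -/

def Ordinal.IsLimit (o : Ordinal) : Prop := o ≠ 0 ∧ ∀ a < o, Order.succ a < o

theorem Ordinal.IsLimit.succ_lt {o a : Ordinal} (h : o.IsLimit) (ha : a < o) :
    Order.succ a < o := h.2 a ha

theorem Ordinal.IsLimit.pos {o : Ordinal} (h : o.IsLimit) : 0 < o := pos_iff_ne_zero.mpr h.1

theorem Cardinal.isLimit_ord {c : Cardinal} (hc : ℵ₀ ≤ c) : c.ord.IsLimit :=
  ⟨by simpa [Ordinal.bot_eq_zero] using (Cardinal.isSuccLimit_ord hc).ne_bot,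
    fun _ ha => (Cardinal.isSuccLimit_ord hc).succ_lt ha⟩

/-- The set of limit ordinals below `κ.ord` closed under a given bounding
function `h` is a club in `κ.ord`, for regular uncountable `κ`. -/
lemma clubD {κ : Cardinal} (hreg : κ.IsRegular) (hunc : ℵ₀ < κ)
    (h : Ordinal → Ordinal) (hh : ∀ γ < κ.ord, h γ < κ.ord) :
    IsClubIn {α | α < κ.ord ∧ α.IsLimit ∧ ∀ γ < α, h γ < α} κ.ord := by
  have hord : κ.ord.IsLimit := Cardinal.isLimit_ord hreg.aleph0_le
  have hcard : ∀ o, o < κ.ord → o.card < κ.ord.cof := by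
    intro o ho; rw [hreg.cof_eq]; exact Cardinal.lt_ord.mp ho
  refine ⟨fun α hα => hα.1, ?_, ?_⟩
  · -- unbounded
    intro α hα
    let g : ℕ → Ordinal := fun n =>
      Nat.rec (α + 1) (fun _ β => ((Ordinal.bsup β fun γ _ => h γ) ⊔ β) + 1) n
    have hgsucc : ∀ n, g (n + 1) = ((Ordinal.bsup (g n) fun γ _ => h γ) ⊔ g n) + 1 :=
      fun n => rfl
    have hglt : ∀ n, g n < κ.ord := by
      intro n; induction n with
      | zero =>
        show α + 1 < κ.ord
        rw [Ordinal.add_one_eq_succ]; exact hord.succ_lt hα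
      | succ n ih =>
        rw [hgsucc, Ordinal.add_one_eq_succ]
        refine hord.succ_lt (max_lt ?_ ih)
        exact Ordinal.bsup_lt_ord (hcard _ ih) fun γ hγ => hh γ (hγ.trans ih)
      
    have hgmono : ∀ n, g n < g (n + 1) := by
      intro n; rw [hgsucc, Ordinal.add_one_eq_succ]
      exact lt_of_le_of_lt (le_max_right _ _) (Order.lt_succ _)
    have hlt_sup : ∀ δ, δ < iSup g → ∃ n, δ < g n := fun δ hδ => Ordinal.lt_iSup_iff.mp hδ
    refine ⟨iSup g, ⟨?_, ⟨?_, ?_⟩, ?_⟩, ?_⟩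
    · -- sup g < κ.ord
      refine Ordinal.iSup_lt_ord_lift ?_ hglt
      rw [hreg.cof_eq]
      simpa using hunc
    · -- ≠ 0
      have h0 : (0 : Ordinal) < α + 1 := by
        rw [Ordinal.add_one_eq_succ]; exact lt_of_le_of_lt (zero_le (a := α)) (Order.lt_succ α)
      exact (lt_of_lt_of_le h0 (Ordinal.le_iSup g 0)).ne'
    · -- limit
      intro δ hδ
      obtain ⟨n, hn⟩ := hlt_sup δ hδ
      exact lt_of_le_of_lt (Order.succ_le_of_lt hn) (lt_of_lt_of_le (hgmono n) (Ordinal.le_iSup g (n+1)))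
    · -- closure under h
      intro γ hγ
      obtain ⟨n, hn⟩ := hlt_sup γ hγ
      have h1 : h γ ≤ Ordinal.bsup (g n) fun γ _ => h γ := Ordinal.le_bsup _ γ hn
      have h2 : (Ordinal.bsup (g n) fun γ _ => h γ) < g (n + 1) := by
        rw [hgsucc, Ordinal.add_one_eq_succ]
        exact lt_of_le_of_lt (le_max_left _ _) (Order.lt_succ _)
      exact lt_of_le_of_lt h1 (lt_of_lt_of_le h2 (Ordinal.le_iSup g (n+1)))
    · -- α ≤ sup g
      have : α ≤ g 0 := by
        show α ≤ α + 1
        rw [Ordinal.add_one_eq_succ]; exact (Order.lt_succ α).le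
      exact this.trans (Ordinal.le_iSup g 0)
  · -- closed
    intro α hα hcl
    obtain ⟨o, ho, f, hf, hsup⟩ := Ordinal.mem_closure_iff_bsup.mp hcl
    by_cases hex : ∃ i hi, f i hi = α
    · obtain ⟨i, hi, hfi⟩ := hex; rw [← hfi]; exact hf i hi
    · push_neg at hex
      have hlt : ∀ i hi, f i hi < α := fun i hi =>
        lt_of_le_of_ne (hsup ▸ Ordinal.le_bsup f i hi) (hex i hi)
      have hlim : ∀ δ, δ < α → ∃ i hi, δ < f i hi := by
        intro δ hδ; rw [← hsup] at hδ; exact (Ordinal.lt_bsup f).mp hδ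
      have h0 : (0 : Ordinal) < o := pos_iff_ne_zero.mpr ho
      refine ⟨hα, ⟨?_, ?_⟩, ?_⟩
      · exact (lt_of_le_of_lt zero_le (hlt 0 h0)).ne'
      · intro δ hδ
        obtain ⟨i, hi, hd⟩ := hlim δ hδ
        exact lt_trans ((hf i hi).2.1.succ_lt hd) (hlt i hi)
      · intro γ hγ
        obtain ⟨i, hi, hd⟩ := hlim γ hγ
        exact lt_trans ((hf i hi).2.2 γ hd) (hlt i hi)

lemma clubIci {κ : Ordinal} {C : Set Ordinal} (hC : IsClubIn C κ) {α : Ordinal} (hα : α < κ) :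
    IsClubIn (C ∩ Ici α) κ := by
  obtain ⟨h1, h2, h3⟩ := hC
  refine ⟨fun β hβ => h1 hβ.1, ?_, ?_⟩
  · intro β hβ
    obtain ⟨γ, hγC, hγ⟩ := h2 (max β α) (max_lt hβ hα)
    exact ⟨γ, ⟨hγC, le_trans (le_max_right _ _) hγ⟩, le_trans (le_max_left _ _) hγ⟩
  · intro β hβ hcl
    exact ⟨h3 β hβ (closure_mono inter_subset_left hcl),
      closure_minimal inter_subset_right isClosed_Ici hcl⟩

/-- Given a bounded three-variable function `zf`, there is a club `C` of limit
ordinals in `κ.ord` such that for `x, x' ≤ lam`, `y < y'` and `y' ∈ C`, the value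
`zf x x' y` is below `y'`. -/
lemma clubZ {κ : Cardinal} (hreg : κ.IsRegular) (hunc : ℵ₀ < κ)
    {lam : Ordinal} (hlam : lam < κ.ord)
    (zf : Ordinal → Ordinal → Ordinal → Ordinal) (hzf : ∀ x x' w, zf x x' w < κ.ord) :
    ∃ C : Set Ordinal, IsClubIn C κ.ord ∧
      (∀ α ∈ C, α.IsLimit) ∧
      ∀ x x' y y', x ≤ lam → x' ≤ lam → y' ∈ C → y < y' → zf x x' y < y' := by
  have hord : κ.ord.IsLimit := Cardinal.isLimit_ord hreg.aleph0_le
  have hcard : ∀ o, o < κ.ord → o.card < κ.ord.cof := by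
    intro o ho; rw [hreg.cof_eq]; exact Cardinal.lt_ord.mp ho
  have hsl : lam + 1 < κ.ord := by
    rw [Ordinal.add_one_eq_succ]; exact hord.succ_lt hlam
  have hbound : ∀ γ < κ.ord,
      (fun γ => Ordinal.bsup (lam + 1) fun x _ =>
        Ordinal.bsup (lam + 1) fun x' _ => Ordinal.bsup γ fun w _ => zf x x' w) γ < κ.ord := by
    intro γ hγ
    refine Ordinal.bsup_lt_ord (hcard _ hsl) fun x hx => ?_
    refine Ordinal.bsup_lt_ord (hcard _ hsl) fun x' hx' => ?_
    exact Ordinal.bsup_lt_ord (hcard _ hγ) fun w hw => hzf x x' w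
  have hclub := clubD hreg hunc _ hbound
  refine ⟨_, hclub, fun α hα => hα.2.1, ?_⟩
  intro x x' y y' hx hx' hC hyy'
  have hxl : x < lam + 1 := by rw [Ordinal.add_one_eq_succ]; exact Order.lt_succ_iff.mpr hx
  have hx'l : x' < lam + 1 := by rw [Ordinal.add_one_eq_succ]; exact Order.lt_succ_iff.mpr hx'
  have hyl : y < y + 1 := by rw [Ordinal.add_one_eq_succ]; exact Order.lt_succ y
  have h1 : zf x x' y ≤ Ordinal.bsup (y + 1) fun w _ => zf x x' w := Ordinal.le_bsup _ y hyl
  have h2 : (Ordinal.bsup (y + 1) fun w _ => zf x x' w) ≤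
      Ordinal.bsup (lam + 1) fun x'' _ => Ordinal.bsup (y + 1) fun w _ => zf x x'' w :=
    Ordinal.le_bsup _ x' hx'l
  have h3 : (Ordinal.bsup (lam + 1) fun x'' _ => Ordinal.bsup (y + 1) fun w _ => zf x x'' w) ≤
      Ordinal.bsup (lam + 1) fun x₀ _ =>
        Ordinal.bsup (lam + 1) fun x'' _ => Ordinal.bsup (y + 1) fun w _ => zf x₀ x'' w :=
    Ordinal.le_bsup _ x hxl
  have h4 := hC.2.2 (y + 1) (by rw [Ordinal.add_one_eq_succ]; exact hC.2.1.succ_lt hyy')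
  exact lt_of_le_of_lt (h1.trans (h2.trans h3)) h4

/-- Lemma 2 of the paper.
Let `G` be a paratopological group and suppose `T ⊆ G` is, as an ordered
topological subspace, a stationary subset `S` of a regular uncountable cardinal
`κ` (realized by a topological embedding `e : S → G`). Then one can choose a
subset `S' ⊆ S` closed and unbounded in `S`, an ordinal `λ ∈ S`, and a set
`L ⊆ [0, λ] ∩ S` such that (1) `λ ∈ L`, (2) `λ` is a limit point of `L`, and
(3) the operation `⋆` viewed as `⟨x, y⟩ ↦ x ⋆ y` is injective on `L × S'`. -/
theorem statement3 {G : Type*} [Group G] [TopologicalSpace G] [ContinuousMul G]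
    (κ : Cardinal) (hreg : κ.IsRegular) (hunc : ℵ₀ < κ)
    (S : Set Ordinal) (hstat : IsStationaryIn S κ.ord)
    (e : ↥S → G) (he : Topology.IsEmbedding e) :
    ∃ (S' : Set Ordinal) (lam : Ordinal) (L : Set Ordinal)
      (hS'S : S' ⊆ S) (hLS : L ⊆ S),
      -- `S'` is closed in the subspace `S` and unbounded (cofinal) in `S`
      (∀ β ∈ closure S', β ∈ S → β ∈ S') ∧ (∀ α ∈ S, ∃ β ∈ S', α ≤ β) ∧
      lam ∈ S ∧ L ⊆ Set.Iic lam ∧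
      lam ∈ L ∧ IsLimitPointOf lam L ∧
      ∀ (x : Ordinal) (hx : x ∈ L) (y : Ordinal) (hy : y ∈ S')
        (x' : Ordinal) (hx' : x' ∈ L) (y' : Ordinal) (hy' : y' ∈ S'),
        e ⟨x, hLS hx⟩ * e ⟨y, hS'S hy⟩ = e ⟨x', hLS hx'⟩ * e ⟨y', hS'S hy'⟩ →
        x = x' ∧ y = y' := by
  classical
  obtain ⟨hSsub, hSmeet⟩ := hstat
  have hord : κ.ord.IsLimit := Cardinal.isLimit_ord hreg.aleph0_le
  -- S is unbounded in κ.ord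
  have clubIio : IsClubIn (Iio κ.ord) κ.ord :=
    ⟨Subset.rfl, fun α hα => ⟨α, hα, le_rfl⟩, fun α hα _ => hα⟩
  have hub : ∀ γ, γ < κ.ord → ∃ β, β ∈ S ∧ γ < β := by
    intro γ hγ
    have hγ1 : γ + 1 < κ.ord := by rw [Ordinal.add_one_eq_succ]; exact hord.succ_lt hγ
    obtain ⟨β, hβS, _, hβγ⟩ := hSmeet (Iio κ.ord ∩ Ici (γ + 1)) (clubIci clubIio hγ1)
    refine ⟨β, hβS, lt_of_lt_of_le ?_ hβγ⟩
    rw [Ordinal.add_one_eq_succ]; exact Order.lt_succ γ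
  -- a choice function picking elements of S above any ordinal
  have hh0 : ∃ h₀ : Ordinal → Ordinal, ∀ γ < κ.ord, h₀ γ ∈ S ∧ γ < h₀ γ := by
    refine ⟨fun γ => if hγ : γ < κ.ord then (hub γ hγ).choose else 0, fun γ hγ => ?_⟩
    dsimp only; rw [dif_pos hγ]; exact (hub γ hγ).choose_spec
  obtain ⟨h₀, hh₀⟩ := hh0
  have hh₀' : ∀ γ < κ.ord, h₀ γ < κ.ord := fun γ hγ => hSsub (hh₀ γ hγ).1
  -- pick lam in S which is a limit of elements of S
  obtain ⟨lam, hlamS, hlamlt, hlamlim, hlamcl⟩ := hSmeet _ (clubD hreg hunc h₀ hh₀')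
  -- the function zf selecting the unique "product partner"
  have main : ∃ zf : Ordinal → Ordinal → Ordinal → Ordinal,
      (∀ x x' w, zf x x' w < κ.ord) ∧
      ∀ (x x' w z : Ordinal) (hx : x ∈ S) (hx' : x' ∈ S) (hw : w ∈ S) (hz : z ∈ S),
        e ⟨x, hx⟩ * e ⟨w, hw⟩ = e ⟨x', hx'⟩ * e ⟨z, hz⟩ → zf x x' w = z := by
    refine ⟨fun x x' w =>
      if h : ∃ z, ∃ (hx : x ∈ S) (hx' : x' ∈ S) (hw : w ∈ S) (hz : z ∈ S),
          e ⟨x, hx⟩ * e ⟨w, hw⟩ = e ⟨x', hx'⟩ * e ⟨z, hz⟩ then h.choose else 0, ?_, ?_⟩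
    · intro x x' w; dsimp only; split_ifs with h
      · obtain ⟨hx, hx', hw, hz, _⟩ := h.choose_spec
        exact hSsub hz
      · exact hord.pos
    · intro x x' w z hx hx' hw hz heq
      have hex : ∃ z, ∃ (hx : x ∈ S) (hx' : x' ∈ S) (hw : w ∈ S) (hz : z ∈ S),
          e ⟨x, hx⟩ * e ⟨w, hw⟩ = e ⟨x', hx'⟩ * e ⟨z, hz⟩ := ⟨z, hx, hx', hw, hz, heq⟩
      dsimp only; rw [dif_pos hex]
      obtain ⟨hx1, hx'1, hw1, hz1, heq1⟩ := hex.choose_spec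
      have : e ⟨hex.choose, hz1⟩ = e ⟨z, hz⟩ := mul_left_cancel (heq1.symm.trans heq)
      exact congrArg Subtype.val (he.injective this)
  obtain ⟨zf, zf_lt, zf_eq⟩ := main
  obtain ⟨Cset, hCclub, hClim, hCkey⟩ := clubZ hreg hunc hlamlt zf zf_lt
  refine ⟨S ∩ Cset, lam, S ∩ Iic lam, inter_subset_left, inter_subset_left,
    ?_, ?_, hlamS, inter_subset_right, ⟨hlamS, le_refl lam⟩, ?_, ?_⟩
  · -- closed in S
    intro β hβcl hβS
    have hβκ : β < κ.ord := hSsub hβS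
    exact ⟨hβS, hCclub.2.2 β hβκ (closure_mono inter_subset_right hβcl)⟩
  · -- cofinal in S
    intro α hαS
    obtain ⟨β, hβS, hβC, hβα⟩ := hSmeet (Cset ∩ Ici α) (clubIci hCclub (hSsub hαS))
    exact ⟨β, ⟨hβS, hβC⟩, hβα⟩
  · -- lam is a limit point of L
    have hsub : S ∩ Iio lam ⊆ (S ∩ Iic lam) \ {lam} :=
      fun z hz => ⟨⟨hz.1, Set.mem_Iic.mpr (le_of_lt (Set.mem_Iio.mp hz.2))⟩, ne_of_lt (Set.mem_Iio.mp hz.2)⟩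
    refine closure_mono hsub ?_
    rw [Ordinal.mem_closure_iff_bsup]
    refine ⟨lam, hlamlim.1, fun γ _ => h₀ γ,
      fun γ hγ => ⟨(hh₀ γ (hγ.trans hlamlt)).1, hlamcl γ hγ⟩, ?_⟩
    apply le_antisymm
    · exact Ordinal.bsup_le fun γ hγ => (hlamcl γ hγ).le
    · by_contra hlt
      push_neg at hlt
      have h1 : h₀ (Ordinal.bsup lam fun γ _ => h₀ γ) ≤ Ordinal.bsup lam fun γ _ => h₀ γ :=
        Ordinal.le_bsup _ _ hlt
      exact absurd h1 (not_le.mpr (hh₀ _ (hlt.trans hlamlt)).2)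
  · -- injectivity
    intro x hx y hy x' hx' y' hy' heq
    rcases lt_trichotomy y y' with hlt | heqy | hgt
    · exfalso
      have hz : zf x x' y = y' := zf_eq x x' y y' hx.1 hx'.1 hy.1 hy'.1 heq
      have := hCkey x x' y y' hx.2 hx'.2 hy'.2 hlt
      rw [hz] at this
      exact lt_irrefl _ this
    · subst heqy
      have hxx : e ⟨x, hx.1⟩ = e ⟨x', hx'.1⟩ := mul_right_cancel heq
      exact ⟨congrArg Subtype.val (he.injective hxx), rfl⟩
    · exfalso
      have hz : zf x' x y' = y := zf_eq x' x y' y hx'.1 hx.1 hy'.1 hy.1 heq.symm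
      have := hCkey x' x y' y hx'.2 hx.2 hy.2 hgt
      rw [hz] at this
      exact lt_irrefl _ this
end

section
/- Let κ be a regular uncountable cardinal and S ⊆ κ a stationary subset, endowed with the subspace topology. Then in any Hausdorff compactification of the space S there is exactly one point that is a complete accumulation point of S, i.e., exactly one point every neighborhood of which contains |S| = κ many points of S. -/
open Set Topology Cardinal

universe u

lemma isClubIn_Ici_inter {κ α : Ordinal} (hα : α < κ) :
    IsClubIn (Set.Ici α ∩ Set.Iio κ) κ := by
  refine ⟨inter_subset_right, fun β hβ =>
    ⟨max α β, ⟨Set.mem_Ici.2 (le_max_left _ _), max_lt hα hβ⟩, le_max_right _ _⟩, fun β hβ hmem => ?_⟩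
  have h1 : β ∈ closure (Set.Ici α) := closure_mono inter_subset_left hmem
  rw [isClosed_Ici.closure_eq] at h1
  exact ⟨h1, hβ⟩

lemma isClubIn_closure_inter {κ : Ordinal} {A : Set Ordinal} (hsub : A ⊆ Set.Iio κ)
    (hunb : ∀ α < κ, ∃ β ∈ A, α ≤ β) : IsClubIn (closure A ∩ Set.Iio κ) κ := by
  refine ⟨inter_subset_right, fun α hα => ?_, fun α hα hmem => ?_⟩
  · obtain ⟨β, hβA, hβ⟩ := hunb α hα
    exact ⟨β, ⟨subset_closure hβA, hsub hβA⟩, hβ⟩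
  · have h1 : α ∈ closure (closure A) := closure_mono inter_subset_left hmem
    rw [closure_closure] at h1
    exact ⟨h1, hα⟩

lemma isClubIn_inter {κ : Ordinal.{u}} (hκ : ℵ₀ < κ.cof) {C D : Set Ordinal}
    (hC : IsClubIn C κ) (hD : IsClubIn D κ) : IsClubIn (C ∩ D) κ := by
  have hlim : Order.IsSuccLimit κ := Ordinal.aleph0_le_cof.1 hκ.le
  refine ⟨fun x hx => hC.1 hx.1, fun α hα => ?_,
    fun α hα hmem => ⟨hC.2.2 α hα (closure_mono inter_subset_left hmem),
      hD.2.2 α hα (closure_mono inter_subset_right hmem)⟩⟩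
  have key : ∀ β : Set.Iio κ, ∃ p : Set.Iio κ × Set.Iio κ,
      (p.1 : Ordinal) ∈ C ∧ (p.2 : Ordinal) ∈ D ∧ (β : Ordinal) ≤ (p.1 : Ordinal) ∧
        (p.1 : Ordinal) < (p.2 : Ordinal) := by
    intro β
    obtain ⟨c, hcC, hc⟩ := hC.2.1 β β.2
    have hcκ : c < κ := hC.1 hcC
    obtain ⟨d, hdD, hd⟩ := hD.2.1 (Order.succ c) (hlim.succ_lt hcκ)
    exact ⟨⟨⟨c, hcκ⟩, ⟨d, hD.1 hdD⟩⟩, hcC, hdD, hc, (Order.lt_succ_of_not_isMax (not_isMax c)).trans_le hd⟩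
  choose P hP1 hP2 hP3 hP4 using key
  let g : ℕ → Set.Iio κ := fun n => Nat.rec (⟨α, hα⟩ : Set.Iio κ) (fun _ x => (P x).2) n
  have hg : ∀ n, g (n + 1) = (P (g n)).2 := fun _ => rfl
  let f : ULift.{u} ℕ → Ordinal := fun n => ((P (g n.down)).1 : Ordinal)
  let h : ULift.{u} ℕ → Ordinal := fun n => ((g (n.down + 1)) : Ordinal)
  have hbf : BddAbove (Set.range f) := Ordinal.bddAbove_range f
  have hbh : BddAbove (Set.range h) := Ordinal.bddAbove_range h
  have hfh : ∀ n : ULift.{u} ℕ, f n < h n := fun n => hP4 (g n.down)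
  have hhf : ∀ n : ℕ, h ⟨n⟩ ≤ f ⟨n + 1⟩ := fun n => hP3 (g (n + 1))
  have hsup_eq : ⨆ n, h n = ⨆ n, f n := by
    apply le_antisymm
    · exact ciSup_le fun n => (hhf n.down).trans (le_ciSup hbf ⟨n.down + 1⟩)
    · exact ciSup_le fun n => (hfh n).le.trans (le_ciSup hbh n)
  have hsκ : (⨆ n, f n) < κ := Ordinal.iSup_lt_ord (by simpa using hκ) fun n => hC.1 (hP1 _)
  have hmemC : (⨆ n, f n) ∈ C := by
    refine hC.2.2 _ hsκ (Ordinal.mem_closure_iff_iSup.2 ⟨ULift.{u} ℕ, inferInstance, f,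
      fun n => hP1 _, rfl⟩)
  have hmemD : (⨆ n, f n) ∈ D := by
    refine hD.2.2 _ hsκ (Ordinal.mem_closure_iff_iSup.2 ⟨ULift.{u} ℕ, inferInstance, h,
      fun n => hP2 (g n.down), hsup_eq⟩)
  exact ⟨⨆ n, f n, ⟨hmemC, hmemD⟩, (hP3 (g 0)).trans (le_ciSup hbf ⟨0⟩)⟩

lemma card_of_unbounded {κ : Cardinal.{u}} (hreg : κ.IsRegular) {A : Set Ordinal.{u}}
    (hsub : A ⊆ Set.Iio κ.ord) (hunb : ∀ α < κ.ord, ∃ β ∈ A, α ≤ β) :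
    Cardinal.lift.{u+1} κ ≤ #(↥A) := by
  classical
  let e := Ordinal.ToType.mk (o := κ.ord)
  let A' : Set κ.ord.ToType := {t | (e.symm t : Ordinal) ∈ A}
  have hA'unb : Set.Unbounded (· < ·) A' := by
    intro a
    obtain ⟨β, hβA, hβ⟩ := hunb (e.symm a) (e.symm a).2
    refine ⟨e ⟨β, hsub hβA⟩, ?_, not_lt.2 ?_⟩
    · show (e.symm (e ⟨β, hsub hβA⟩) : Ordinal) ∈ A
      rw [OrderIso.symm_apply_apply]
      exact hβA
    · conv_lhs => rw [← e.apply_symm_apply a]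
      exact e.le_iff_le.2 (Subtype.coe_le_coe.1 hβ)
  have h1 : κ ≤ #(↥A') := by
    haveI : IsWellOrder κ.ord.ToType (· < ·) := isWellOrder_lt
    have h := Order.cof_le (s := A') (fun a => let ⟨b, hb, hab⟩ := hA'unb a; ⟨b, hb, not_lt.1 hab⟩)
    rwa [Ordinal.cof_toType, hreg.cof_ord] at h
  have h2 : Cardinal.lift.{u+1} #(↥A') ≤ Cardinal.lift.{u} #(↥A) := by
    refine Cardinal.lift_mk_le'.2 ⟨⟨fun t => ⟨(e.symm t : Ordinal), t.2⟩, ?_⟩⟩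
    intro t₁ t₂ ht
    have h3 := congrArg (fun x : ↥A => (x : Ordinal)) ht
    exact Subtype.ext (e.symm.injective (Subtype.ext h3))
  calc Cardinal.lift.{u+1} κ ≤ Cardinal.lift.{u+1} #(↥A') := Cardinal.lift_le.2 h1
    _ ≤ Cardinal.lift.{u} #(↥A) := h2
    _ = #(↥A) := Cardinal.lift_id'.{u, u+1} _

lemma unbounded_of_card {κ : Cardinal.{u}} {A : Set Ordinal.{u}} (hsub : A ⊆ Set.Iio κ.ord)
    (hcard : Cardinal.lift.{u+1} κ ≤ #(↥A)) : ∀ α < κ.ord, ∃ β ∈ A, α ≤ β := by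
  intro α hα
  by_contra hcon
  push_neg at hcon
  have hsub2 : A ⊆ Set.Iio α := fun β hβ => hcon β hβ
  have hle : #(↥A) ≤ Cardinal.lift.{u+1} α.card :=
    (mk_le_mk_of_subset hsub2).trans_eq (Ordinal.mk_Iio_ordinal α)
  have h2 : κ ≤ α.card := Cardinal.lift_le.1 (hcard.trans hle)
  exact absurd (Cardinal.lt_ord.1 hα) (not_lt.2 h2)

/-- observation in Claim 1 of Lemma 3.
Let `κ` be a regular uncountable cardinal and `S ⊆ κ` stationary, with the
subspace topology. Then any Hausdorff compactification `X` of `S` (a compact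
Hausdorff space into which `S` embeds densely) has exactly one point that is a
complete accumulation point of `S`, i.e. exactly one point every neighborhood
of which contains `|S| = κ` many points of `S`. -/
theorem statement4 (κ : Cardinal.{u}) (hreg : κ.IsRegular) (hunc : ℵ₀ < κ)
    (S : Set Ordinal) (hstat : IsStationaryIn S κ.ord)
    (X : Type*) [TopologicalSpace X] [CompactSpace X] [T2Space X]
    (i : ↥S → X) (hi : Topology.IsEmbedding i) (hdense : DenseRange i) :
    ∃! p : X, ∀ U ∈ nhds p, #(↥(i ⁻¹' U)) = Cardinal.lift.{u+1} κ := by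
  classical
  have hScard : #(↥S) = Cardinal.lift.{u+1} κ := by
    apply le_antisymm
    · calc #(↥S) ≤ #(↥(Set.Iio κ.ord)) := mk_le_mk_of_subset hstat.1
        _ = Cardinal.lift.{u+1} (κ.ord.card) := Ordinal.mk_Iio_ordinal _
        _ = Cardinal.lift.{u+1} κ := by rw [Cardinal.card_ord]
    · refine card_of_unbounded hreg hstat.1 (fun α hα => ?_)
      obtain ⟨β, hβS, hβC⟩ := hstat.2 _ (isClubIn_Ici_inter hα)
      exact ⟨β, hβS, hβC.1⟩
  -- existence
  have hex : ∃ p : X, ∀ U ∈ nhds p, #(↥(i ⁻¹' U)) = Cardinal.lift.{u+1} κ := by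
    by_contra hno
    push_neg at hno
    have key : ∀ p : X, ∃ U : Set X, IsOpen U ∧ p ∈ U ∧
        #(↥(i ⁻¹' U)) < Cardinal.lift.{u+1} κ := by
      intro p
      obtain ⟨U, hU, hUcard⟩ := hno p
      have h1 : #(↥(i ⁻¹' interior U)) ≤ #(↥(i ⁻¹' U)) :=
        mk_le_mk_of_subset (preimage_mono interior_subset)
      have h2 : #(↥(i ⁻¹' U)) ≤ Cardinal.lift.{u+1} κ :=
        le_of_le_of_eq (mk_set_le _) hScard
      exact ⟨interior U, isOpen_interior, mem_interior_iff_mem_nhds.2 hU,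
        h1.trans_lt (h2.lt_of_ne hUcard)⟩
    choose U hUopen hUmem hUcard using key
    obtain ⟨t, ht⟩ := isCompact_univ.elim_finite_subcover U hUopen
      (fun x _ => mem_iUnion.2 ⟨x, hUmem x⟩)
    have hlt : ∀ t : Finset X, #(↥(⋃ p ∈ t, i ⁻¹' (U p))) < Cardinal.lift.{u+1} κ := by
      intro t
      induction t using Finset.induction_on with
      | empty =>
        have he : (⋃ p ∈ (∅ : Finset X), i ⁻¹' (U p)) = (∅ : Set ↥S) := by simp
        rw [he, mk_emptyCollection]
        exact lt_of_lt_of_le Cardinal.aleph0_pos (Cardinal.aleph0_le_lift.2 hunc.le)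
      | @insert a s ha ih =>
        rw [Finset.set_biUnion_insert]
        refine (mk_union_le _ _).trans_lt (Cardinal.add_lt_of_lt ?_ (hUcard a) ih)
        exact Cardinal.aleph0_le_lift.2 hunc.le
    have hcover : (Set.univ : Set ↥S) ⊆ ⋃ p ∈ t, i ⁻¹' (U p) := by
      intro s _
      have := ht (mem_univ (i s))
      simp only [mem_iUnion, exists_prop] at this ⊢
      obtain ⟨p, hpt, hpU⟩ := this
      exact ⟨p, hpt, hpU⟩
    have : Cardinal.lift.{u+1} κ ≤ #(↥(⋃ p ∈ t, i ⁻¹' (U p))) := by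
      calc Cardinal.lift.{u+1} κ = #(↥S) := hScard.symm
        _ = #(↥(Set.univ : Set ↥S)) := mk_univ.symm
        _ ≤ _ := mk_le_mk_of_subset hcover
    exact absurd this (not_le.2 (hlt t))
  obtain ⟨p, hp⟩ := hex
  refine ⟨p, hp, fun q hq => ?_⟩
  by_contra hne
  obtain ⟨Vq, Vp, hVqo, hVpo, hqV, hpV, hdisjV⟩ := t2_separation hne
  obtain ⟨Cq, hCqn, hCqc, hCqs⟩ := exists_mem_nhds_isClosed_subset (hVqo.mem_nhds hqV)
  obtain ⟨Cp, hCpn, hCpc, hCps⟩ := exists_mem_nhds_isClosed_subset (hVpo.mem_nhds hpV)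
  have hdisj : Disjoint Cq Cp := hdisjV.mono hCqs hCps
  set A : Set ↥S := i ⁻¹' Cp with hA
  set B : Set ↥S := i ⁻¹' Cq with hB
  have hAcard : #(↥A) = Cardinal.lift.{u+1} κ := hp Cp hCpn
  have hBcard : #(↥B) = Cardinal.lift.{u+1} κ := hq Cq hCqn
  have hAclosed : IsClosed A := hCpc.preimage hi.continuous
  have hBclosed : IsClosed B := hCqc.preimage hi.continuous
  set A' : Set Ordinal := Subtype.val '' A with hA'
  set B' : Set Ordinal := Subtype.val '' B with hB'
  have hA'card : #(↥A') = Cardinal.lift.{u+1} κ := by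
    rw [hA', Cardinal.mk_image_eq Subtype.val_injective, hAcard]
  have hB'card : #(↥B') = Cardinal.lift.{u+1} κ := by
    rw [hB', Cardinal.mk_image_eq Subtype.val_injective, hBcard]
  have hA'sub : A' ⊆ Set.Iio κ.ord := fun x hx => by
    obtain ⟨a, _, rfl⟩ := hx; exact hstat.1 a.2
  have hB'sub : B' ⊆ Set.Iio κ.ord := fun x hx => by
    obtain ⟨a, _, rfl⟩ := hx; exact hstat.1 a.2
  have hA'unb := unbounded_of_card hA'sub hA'card.ge
  have hB'unb := unbounded_of_card hB'sub hB'card.ge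
  have hclub : IsClubIn ((closure A' ∩ Set.Iio κ.ord) ∩ (closure B' ∩ Set.Iio κ.ord)) κ.ord := by
    refine isClubIn_inter ?_ (isClubIn_closure_inter hA'sub hA'unb)
      (isClubIn_closure_inter hB'sub hB'unb)
    rwa [hreg.cof_ord]
  obtain ⟨α, hαS, hαmem⟩ := hstat.2 _ hclub
  set a : ↥S := ⟨α, hαS⟩ with ha
  have haA : a ∈ A := by
    have : a ∈ closure A := closure_subtype.2 hαmem.1.1
    rwa [hAclosed.closure_eq] at this
  have haB : a ∈ B := by
    have : a ∈ closure B := closure_subtype.2 hαmem.2.1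
    rwa [hBclosed.closure_eq] at this
  exact (Set.disjoint_left.1 hdisj) haB haA
end

section
/- Suppose S is a stationary subset of a regular uncountable cardinal κ, λ < κ, λ ∈ L ⊆ [0, λ], λ is a limit point of L, f is a continuous bijection of L × S onto its image Z, f restricted to V_λ = {λ} × S is a homeomorphism onto its image, Z is normal, and f(V_λ) is closed in Z. Then for any α < κ there exist a_α < λ and b_α < κ such that the closure in Z of f(([a_α, λ] ∩ L) × ([b_α, κ) ∩ S)) is disjoint from the closure in Z of f(([a_α, λ] ∩ L) × {α}). -/
open Set Topology Cardinal

section Aux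

/-- If `p > 0` is a limit point of a set of ordinals `≤ p`, then `p` is a limit ordinal. -/
lemma aux_limit_pos {p : Ordinal} {L : Set Ordinal} (hL : L ⊆ Set.Iic p)
    (h : IsLimitPointOf p L) : 0 < p := by
  rcases eq_zero_or_pos p with rfl | hpos
  · exfalso
    have : L \ {(0 : Ordinal)} = ∅ := by
      ext x; simp only [Set.mem_diff, Set.mem_singleton_iff, Set.mem_empty_iff_false, iff_false]
      rintro ⟨hx, hx0⟩
      exact hx0 (le_antisymm (hL hx) (zero_le (a := x)))
    rw [IsLimitPointOf, this, closure_empty] at h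
    exact h
  · exact hpos

lemma aux_limit_succ {p : Ordinal} {L : Set Ordinal} (hL : L ⊆ Set.Iic p)
    (h : IsLimitPointOf p L) : ∀ a < p, a + 1 < p := by
  intro a ha
  by_contra hcon
  push_neg at hcon
  have hpeq : p = a + 1 := le_antisymm hcon (by rwa [Ordinal.add_one_eq_succ, Order.succ_le_iff])
  have hopen : IsOpen (Set.Ioi a) := isOpen_Ioi
  obtain ⟨x, hxO, hxL, hxp⟩ := mem_closure_iff.1 h _ hopen (hpeq ▸ lt_of_lt_of_le ha hcon)
  have hxle : x ≤ p := hL hxL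
  have : x = p := le_antisymm hxle (by
    rw [hpeq, Ordinal.add_one_eq_succ, Order.succ_le_iff]
    exact hxO)
  exact hxp this

end Aux

/-- Claim 3 in Lemma 3 of the paper.
Suppose `S` is stationary in a regular uncountable cardinal `κ`, `λ < κ`,
`λ ∈ L ⊆ [0, λ]`, `λ` is a limit point of `L`, `f` is a continuous bijection of
`L × S` onto its image `Z`, `f` restricted to `V_λ = {λ} × S` is a homeomorphism
onto its image, `Z` is normal, and `f(V_λ)` is closed in `Z`. Then for any
`α < κ` there exist `a_α < λ` and `b_α < κ` such that the closure in `Z` of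
`f(([a_α, λ] ∩ L) × ([b_α, κ) ∩ S))` is disjoint from the closure in `Z` of
`f(([a_α, λ] ∩ L) × {α})`. -/
theorem statement7 (κ : Cardinal) (hreg : κ.IsRegular) (hunc : ℵ₀ < κ)
    (S : Set Ordinal) (hstat : IsStationaryIn S κ.ord)
    (lam : Ordinal) (hlam : lam < κ.ord)
    (L : Set Ordinal) (hL : L ⊆ Set.Iic lam) (hlamL : lam ∈ L)
    (hlim : IsLimitPointOf lam L)
    (Z : Type*) [TopologicalSpace Z] [NormalSpace Z]
    (f : ↥L × ↥S → Z) (hcont : Continuous f) (hinj : Function.Injective f)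
    (hsurj : Function.Surjective f)
    (hres : Topology.IsEmbedding fun y : ↥S => f (⟨lam, hlamL⟩, y))
    (hclosed : IsClosed (f '' {x : ↥L × ↥S | (x.1 : Ordinal) = lam})) :
    ∀ α < κ.ord, ∃ a < lam, ∃ b < κ.ord,
      Disjoint
        (closure (f '' {p : ↥L × ↥S |
          (a ≤ (p.1 : Ordinal) ∧ (p.1 : Ordinal) ≤ lam) ∧ b ≤ (p.2 : Ordinal)}))
        (closure (f '' {p : ↥L × ↥S |
          (a ≤ (p.1 : Ordinal) ∧ (p.1 : Ordinal) ≤ lam) ∧ (p.2 : Ordinal) = α})) := by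
  intro α hα
  have h0lam : 0 < lam := aux_limit_pos hL hlim
  have hsucclam : ∀ a < lam, a + 1 < lam := aux_limit_succ hL hlim
  have h0κ : (0 : Ordinal) < κ.ord := lt_of_le_of_lt (zero_le (a := lam)) hlam
  by_cases hαS : α ∈ S
  swap
  · -- trivial case : the second set is empty
    refine ⟨0, h0lam, 0, h0κ, ?_⟩
    have hempty : {p : ↥L × ↥S |
        ((0:Ordinal) ≤ (p.1 : Ordinal) ∧ (p.1 : Ordinal) ≤ lam) ∧ (p.2 : Ordinal) = α} = ∅ := by
      ext p
      simp only [Set.mem_setOf_eq, Set.mem_empty_iff_false, iff_false, not_and]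
      intro _ h2
      exact hαS (h2 ▸ p.2.2)
    rw [hempty]
    simp
  · -- main case : α ∈ S
    set lamL : ↥L := ⟨lam, hlamL⟩ with hlamLdef
    set g : ↥S → Z := fun y => f (lamL, y) with hgdef
    have hrange : Set.range g = f '' {x : ↥L × ↥S | (x.1 : Ordinal) = lam} := by
      ext z
      constructor
      · rintro ⟨y, rfl⟩
        exact ⟨(lamL, y), rfl, rfl⟩
      · rintro ⟨x, hx, rfl⟩
        refine ⟨x.2, ?_⟩
        have h1 : x.1 = lamL := Subtype.ext hx
        show f (lamL, x.2) = f x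
        rw [← h1]
    have hgraneclosed : IsClosed (Set.range g) := by rw [hrange]; exact hclosed
    have hgclosedmap : IsClosedMap g := hres.toIsInducing.isClosedMap hgraneclosed
    -- the two disjoint closed sets
    set F1 : Set Z := g '' {y : ↥S | α < (y : Ordinal)} with hF1def
    set F2 : Set Z := g '' {y : ↥S | (y : Ordinal) ≤ α} with hF2def
    have hF1closed : IsClosed F1 := by
      apply hgclosedmap
      have : {y : ↥S | α < (y : Ordinal)} = (Subtype.val) ⁻¹' (Set.Ici (α + 1)) := by
        ext y
        simp [Set.mem_Ici, Order.add_one_le_iff]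
      rw [this]
      exact isClosed_Ici.preimage continuous_subtype_val
    have hF2closed : IsClosed F2 := by
      apply hgclosedmap
      have : {y : ↥S | (y : Ordinal) ≤ α} = (Subtype.val) ⁻¹' (Set.Iic α) := rfl
      rw [this]
      exact isClosed_Iic.preimage continuous_subtype_val
    have hF1F2 : Disjoint F1 F2 := by
      rw [Set.disjoint_left]
      rintro z ⟨y, hy, rfl⟩ ⟨y', hy', hz⟩
      have : (lamL, y') = (lamL, y) := hinj hz
      have hyy : y' = y := (Prod.ext_iff.1 this).2
      rw [hyy] at hy'
      exact absurd (show (y : Ordinal) ≤ α from hy') (not_le.2 hy)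
    -- separate by open sets with disjoint closures
    obtain ⟨U, hUopen, hF1U, hclU⟩ :=
      normal_exists_closure_subset hF1closed hF2closed.isOpen_compl
        (fun z hz => Set.disjoint_left.1 hF1F2 hz)
    obtain ⟨V, hVopen, hF2V, hclV⟩ :=
      normal_exists_closure_subset hF2closed isClosed_closure.isOpen_compl
        (fun z hz hzU => (hclU hzU) hz)
    have hUV : Disjoint (closure U) (closure V) :=
      Set.disjoint_left.2 fun {x} hxU hxV => hclV hxV hxU
    -- Claim B : a tail of L × {α} is mapped into V
    have hfαV : f (lamL, ⟨α, hαS⟩) ∈ V := hF2V ⟨⟨α, hαS⟩, le_refl α, rfl⟩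
    obtain ⟨t1, t2, ht1, ht2, hmem1, hmem2, hsub⟩ :=
      isOpen_prod_iff.1 (hVopen.preimage hcont) lamL ⟨α, hαS⟩ hfαV
    have ht1n : t1 ∈ 𝓝 lamL := ht1.mem_nhds hmem1
    rw [nhds_subtype] at ht1n
    obtain ⟨O1, hO1n, hO1sub⟩ := Filter.mem_comap.1 ht1n
    obtain ⟨a2, ha2lam, ha2sub⟩ := exists_Ioc_subset_of_mem_nhds hO1n ⟨0, h0lam⟩
    have hB : ∀ x : ↥L, a2 < (x : Ordinal) → f (x, ⟨α, hαS⟩) ∈ V := by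
      intro x hx
      exact hsub ⟨hO1sub (ha2sub ⟨hx, hL x.2⟩), hmem2⟩
    clear ht1n hO1n hO1sub ha2sub hsub hmem1 hmem2 ht1 ht2
    -- Claim A : some tail rectangle is mapped into U
    have claimA : ∃ a < lam, ∃ b < κ.ord,
        ∀ p : ↥L × ↥S, a ≤ (p.1 : Ordinal) → b ≤ (p.2 : Ordinal) → f p ∈ U := by
      by_contra hcon
      push_neg at hcon
      have hwit : ∀ a b : Ordinal, ∃ s : Ordinal, s < κ.ord ∧
          (a < lam → b < κ.ord → ∃ hs : s ∈ S, b ≤ s ∧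
            ∃ x : ↥L, a ≤ (x : Ordinal) ∧ f (x, ⟨s, hs⟩) ∉ U) := by
        intro a b
        by_cases h : a < lam ∧ b < κ.ord
        · obtain ⟨p, hp1, hp2, hp3⟩ := hcon a h.1 b h.2
          refine ⟨(p.2 : Ordinal), hstat.1 p.2.2, fun _ _ => ⟨p.2.2, hp2, p.1, hp1, ?_⟩⟩
          simpa using hp3
        · exact ⟨0, h0κ, fun h1 h2 => absurd ⟨h1, h2⟩ h⟩
      choose w hw1 hw2 using hwit
      set nxt : Ordinal → Ordinal := fun o =>
        max (o + 1) (Ordinal.blsub.{_, 0} o fun b _ => Ordinal.blsub.{_, 0} lam fun a _ => w a b) with hnxt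
      have hκlim : Order.IsSuccLimit κ.ord := Cardinal.isSuccLimit_ord hunc.le
      have hnxtlt : ∀ o < κ.ord, nxt o < κ.ord := by
        intro o ho
        apply max_lt
        · rw [Ordinal.add_one_eq_succ]; exact hκlim.succ_lt ho
        · exact Cardinal.blsub_lt_ord_of_isRegular hreg (Cardinal.lt_ord.1 ho)
            fun b _ => Cardinal.blsub_lt_ord_of_isRegular hreg (Cardinal.lt_ord.1 hlam)
              fun a _ => hw1 a b
      have hnxtgt : ∀ o, o < nxt o := fun o =>
        lt_of_lt_of_le (by rw [Ordinal.add_one_eq_succ]; exact Order.lt_succ o) (le_max_left _ _)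
      set C : Set Ordinal := {β | β < κ.ord ∧ α < β ∧ (∀ γ < β, γ + 1 < β) ∧
        ∀ a < lam, ∀ b < β, ∃ p : ↥L × ↥S,
          a ≤ (p.1 : Ordinal) ∧ b ≤ (p.2 : Ordinal) ∧ (p.2 : Ordinal) < β ∧ f p ∉ U} with hCdef
      have hub : ∀ δ < κ.ord, ∃ β ∈ C, δ ≤ β := by
        intro δ hδ
        set s0 : Ordinal := max δ α + 1 with hs0
        set seq : ℕ → Ordinal := fun n => Nat.rec s0 (fun _ o => nxt o) n with hseq
        have hseqsucc : ∀ n, seq (n + 1) = nxt (seq n) := fun n => rfl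
        have hseqκ : ∀ n, seq n < κ.ord := by
          intro n
          induction n with
          | zero =>
            show s0 < κ.ord
            rw [hs0, Ordinal.add_one_eq_succ]
            exact hκlim.succ_lt (max_lt hδ hα)
          | succ n ih => rw [hseqsucc]; exact hnxtlt _ ih
        have hseqmono : ∀ n, seq n < seq (n + 1) := fun n => (hseqsucc n) ▸ hnxtgt (seq n)
        set β : Ordinal := ⨆ n, seq n with hβdef
        have hβκ : β < κ.ord := Cardinal.iSup_lt_ord_lift_of_isRegular hreg
          (by simpa using hunc) hseqκ
        have hle : ∀ n, seq n ≤ β := fun n => Ordinal.le_iSup seq n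
        have hltβ : ∀ γ, γ < β → ∃ n, γ < seq n := fun γ h => Ordinal.lt_iSup_iff.1 h
        have hs0gt : max δ α < s0 := by
          rw [hs0, Ordinal.add_one_eq_succ]; exact Order.lt_succ _
        have hs0β : s0 ≤ β := hle 0
        refine ⟨β, ⟨hβκ, ?_, ?_, ?_⟩, ?_⟩
        · exact lt_of_le_of_lt (le_max_right δ α) (lt_of_lt_of_le hs0gt hs0β)
        · intro γ hγ
          obtain ⟨n, hn⟩ := hltβ γ hγ
          have h1 : γ + 1 ≤ seq n := by
            rw [Ordinal.add_one_eq_succ, Order.succ_le_iff]; exact hn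
          exact lt_of_le_of_lt h1 (lt_of_lt_of_le (hseqmono n) (hle (n + 1)))
        · intro a ha b hb
          obtain ⟨n, hn⟩ := hltβ b hb
          obtain ⟨hs, hbs, x, hax, hfx⟩ := hw2 a b ha (lt_trans hb hβκ)
          refine ⟨(x, ⟨w a b, hs⟩), hax, hbs, ?_, hfx⟩
          calc w a b < Ordinal.blsub.{_, 0} lam (fun a _ => w a b) := Ordinal.lt_blsub.{_, 0} _ a ha
            _ < Ordinal.blsub.{_, 0} (seq n) (fun b _ => Ordinal.blsub.{_, 0} lam fun a _ => w a b) :=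
                Ordinal.lt_blsub.{_, 0} _ b hn
            _ ≤ nxt (seq n) := le_max_right _ _
            _ = seq (n + 1) := (hseqsucc n).symm
            _ ≤ β := hle (n + 1)
        · exact le_of_lt (lt_of_le_of_lt (le_max_left δ α) (lt_of_lt_of_le hs0gt hs0β))
      have hcl : ∀ β < κ.ord, β ∈ closure C → β ∈ C := by
        intro β hβκ hβcl
        by_cases hβC : β ∈ C
        · exact hβC
        · have key : ∀ b < β, ∃ β' ∈ C, b < β' ∧ β' < β := by
            intro b hb
            have hopen : IsOpen (Set.Ioi b ∩ Set.Iio (β + 1)) := isOpen_Ioi.inter isOpen_Iio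
            obtain ⟨β', ⟨hβ'1, hβ'2⟩, hβ'C⟩ := mem_closure_iff.1 hβcl _ hopen
              ⟨hb, by rw [Ordinal.add_one_eq_succ]; exact Order.lt_succ β⟩
            have hβ'le : β' ≤ β := by
              rw [Set.mem_Iio, Ordinal.add_one_eq_succ, Order.lt_succ_iff] at hβ'2
              exact hβ'2
            rcases lt_or_eq_of_le hβ'le with h | h
            · exact ⟨β', hβ'C, hβ'1, h⟩
            · exact absurd (h ▸ hβ'C) hβC
          have hβ0 : 0 < β := by
            rcases eq_zero_or_pos β with rfl | h
            · exfalso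
              obtain ⟨β', hβ'O, hβ'C⟩ := mem_closure_iff.1 hβcl _
                (isOpen_Iio (a := (1 : Ordinal))) (Set.mem_Iio.2 zero_lt_one)
              have : β' = 0 := Ordinal.lt_one_iff_zero.1 hβ'O
              exact hβC (this ▸ hβ'C)
            · exact h
          have hβlimit : ∀ γ < β, γ + 1 < β := by
            intro γ hγ
            by_contra hcon2
            push_neg at hcon2
            have hβeq : β = γ + 1 := le_antisymm hcon2
              (by rw [Ordinal.add_one_eq_succ, Order.succ_le_iff]; exact hγ)
            obtain ⟨β', hβ'C, h1, h2⟩ := key γ hγ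
            rw [hβeq, Ordinal.add_one_eq_succ, Order.lt_succ_iff] at h2
            exact absurd h2 (not_le.2 h1)
          obtain ⟨β0, hβ0C, _, hβ0β⟩ := key 0 hβ0
          refine ⟨hβκ, lt_trans hβ0C.2.1 hβ0β, hβlimit, ?_⟩
          intro a ha b hb
          obtain ⟨β', hβ'C, hb', hβ'β⟩ := key b hb
          obtain ⟨p, h1, h2, h3, h4⟩ := hβ'C.2.2.2 a ha b hb'
          exact ⟨p, h1, h2, lt_trans h3 hβ'β, h4⟩
      have hclub : IsClubIn C κ.ord := ⟨fun β hβ => hβ.1, hub, hcl⟩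
      obtain ⟨β, hβS, hβC⟩ := hstat.2 C hclub
      have hfU : f (lamL, ⟨β, hβS⟩) ∈ U := hF1U ⟨⟨β, hβS⟩, hβC.2.1, rfl⟩
      obtain ⟨u1, u2, hu1, hu2, humem1, humem2, husub⟩ :=
        isOpen_prod_iff.1 (hUopen.preimage hcont) lamL ⟨β, hβS⟩ hfU
      have hu1n : u1 ∈ 𝓝 lamL := hu1.mem_nhds humem1
      rw [nhds_subtype] at hu1n
      obtain ⟨P1, hP1n, hP1sub⟩ := Filter.mem_comap.1 hu1n
      obtain ⟨a1, ha1, hIoc1⟩ := exists_Ioc_subset_of_mem_nhds hP1n ⟨0, h0lam⟩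
      have hu2n : u2 ∈ 𝓝 (⟨β, hβS⟩ : ↥S) := hu2.mem_nhds humem2
      rw [nhds_subtype] at hu2n
      obtain ⟨P2, hP2n, hP2sub⟩ := Filter.mem_comap.1 hu2n
      obtain ⟨c, hc, hIoc2⟩ := exists_Ioc_subset_of_mem_nhds hP2n ⟨α, hβC.2.1⟩
      obtain ⟨p, hp1, hp2, hp3, hp4⟩ :=
        hβC.2.2.2 (a1 + 1) (hsucclam a1 ha1) (c + 1) (hβC.2.2.1 c hc)
      apply hp4
      apply husub
      have hc1 : a1 < (p.1 : Ordinal) := lt_of_lt_of_le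
        (by rw [Ordinal.add_one_eq_succ]; exact Order.lt_succ a1) hp1
      have hc2 : c < (p.2 : Ordinal) := lt_of_lt_of_le
        (by rw [Ordinal.add_one_eq_succ]; exact Order.lt_succ c) hp2
      exact ⟨hP1sub (hIoc1 ⟨hc1, hL p.1.2⟩), hP2sub (hIoc2 ⟨hc2, le_of_lt hp3⟩)⟩
    -- assemble
    obtain ⟨aA, haA, b, hb, hA⟩ := claimA
    refine ⟨max aA (a2 + 1), max_lt haA (hsucclam a2 ha2lam), b, hb, ?_⟩
    refine hUV.mono ?_ ?_
    · apply closure_mono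
      rintro z ⟨p, ⟨⟨h1, _⟩, h2⟩, rfl⟩
      exact hA p (le_trans (le_max_left _ _) h1) h2
    · apply closure_mono
      rintro z ⟨p, ⟨⟨h1, _⟩, h2⟩, rfl⟩
      have hlt : a2 < (p.1 : Ordinal) := lt_of_lt_of_le
        (lt_of_lt_of_le (by rw [Ordinal.add_one_eq_succ]; exact Order.lt_succ a2)
          (le_max_right aA (a2 + 1))) h1
      have hp2 : p.2 = (⟨α, hαS⟩ : ↥S) := Subtype.ext h2
      have h3 := hB p.1 hlt
      rw [← hp2] at h3
      exact h3
end
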